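/- arXiv:1407.1183 — 5 statements merged into one kernel-verified Lean document; each statement's English description precedes it below -/
import Mathlib

section
/- Let Δ ⊂ ℝ^n be a compact convex set. Then ivol(Δ + Π_n) ≥ vol(Δ), where Δ + Π_n denotes the Minkowski sum with the unit cube. Moreover, for any integral box Π one has ivol(Π ∩ (Δ + Π_n)) ≥ vol(Π ∩ Δ). -/
/-!
Rounding every coordinate to the nearest integer moves a point by at most `1/2` in the sup
norm, so it maps `Δ` into the integer points of `Δ + Π_n`, and it maps an integral box into
itself. Hence `Δ` (resp. `Π ∩ Δ`) is covered by the sup-norm balls of radius `1/2`, each of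
volume `1`, centred at the integer points of `Δ + Π_n` (resp. `Π ∩ (Δ + Π_n)`).
-/

open MeasureTheory Pointwise

/-- The unit cube `Π_n = [-1,1]^n` in `ℝ^n`. -/
def unitCube (n : ℕ) : Set (Fin n → ℝ) := {x | ∀ i, x i ∈ Set.Icc (-1 : ℝ) 1}

/-- The set of integer points of a set `S ⊆ ℝ^n`. -/
def intPts {n : ℕ} (S : Set (Fin n → ℝ)) : Set (Fin n → ℝ) :=
  {x ∈ S | ∀ i, ∃ k : ℤ, x i = (k : ℝ)}

/-- An integral box `[a_1,b_1] × ⋯ × [a_n,b_n]`. -/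
def intBox {n : ℕ} (a b : Fin n → ℤ) : Set (Fin n → ℝ) :=
  {x | ∀ i, x i ∈ Set.Icc (a i : ℝ) (b i : ℝ)}

open Set Metric

theorem round_monotone {α : Type*} [Field α] [LinearOrder α] [IsStrictOrderedRing α]
    [FloorRing α] : Monotone (round : α → ℤ) := fun x y h => by
  simpa only [round_eq] using Int.floor_mono (by linarith : x + 1 / 2 ≤ y + 1 / 2)

section roundPt

variable {ι : Type*} [Fintype ι]

noncomputable def roundPt (x : ι → ℝ) : ι → ℝ := fun i => (round (x i) : ℝ)

theorem dist_roundPt_le (x : ι → ℝ) : dist x (roundPt x) ≤ 1 / 2 :=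
  (dist_pi_le_iff (by norm_num)).2 fun i => abs_sub_round (x i)

theorem volume_le_ncard_of_mapsTo_roundPt {S P : Set (ι → ℝ)} (hP : P.Finite)
    (h : MapsTo roundPt S P) : volume S ≤ P.ncard := by
  have hcover : S ⊆ ⋃ p ∈ hP.toFinset, closedBall p (1 / 2) := fun x hx =>
    mem_biUnion (hP.mem_toFinset.2 (h hx)) (mem_closedBall.2 (dist_roundPt_le x))
  calc volume S ≤ ∑ p ∈ hP.toFinset, volume (closedBall p (1 / 2)) :=
        (measure_mono hcover).trans (measure_biUnion_finset_le _ _)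
    _ = P.ncard := by simp [ncard_eq_toFinset_card P hP]

end roundPt

section intPts

variable {n : ℕ}

theorem intPts_finite {S : Set (Fin n → ℝ)} (hS : Bornology.IsBounded S) :
    (intPts S).Finite := by
  set e : (Fin n → ℤ) → Fin n → ℝ := Pi.map fun _ => ((↑) : ℤ → ℝ)
  have he : Isometry e := Isometry.piMap _ fun _ => Real.isometry_intCast
  have hfin : (e ⁻¹' S).Finite := by
    simpa using finite_isBounded_inter_isClosed (s := univ) DiscreteTopology.isDiscrete
      (he.antilipschitz.isBounded_preimage hS) isClosed_univ
  refine (hfin.image e).subset fun x ⟨hxS, hxint⟩ => ?_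
  choose k hk using hxint
  obtain rfl : x = e k := funext hk
  exact mem_image_of_mem e hxS

theorem toReal_volume_le_ncard_intPts {S T : Set (Fin n → ℝ)} (hT : Bornology.IsBounded T)
    (h : MapsTo roundPt S (intPts T)) : (volume S).toReal ≤ (intPts T).ncard :=
  ENNReal.toReal_le_of_le_ofReal (by positivity) <| by
    simpa using volume_le_ncard_of_mapsTo_roundPt (intPts_finite hT) h

theorem roundPt_mem_intPts_add_unitCube {S : Set (Fin n → ℝ)} {x : Fin n → ℝ} (hx : x ∈ S) :
    roundPt x ∈ intPts (S + unitCube n) := by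
  refine ⟨⟨x, hx, roundPt x - x, fun i => ?_, add_sub_cancel x _⟩, fun i => ⟨_, rfl⟩⟩
  have := abs_le.1 (abs_sub_round (x i))
  simp only [roundPt, Pi.sub_apply]
  constructor <;> linarith

theorem roundPt_mem_intBox {a b : Fin n → ℤ} {x : Fin n → ℝ} (hx : x ∈ intBox a b) :
    roundPt x ∈ intBox a b := fun i => by
  have ha := round_monotone (hx i).1
  have hb := round_monotone (hx i).2
  rw [round_intCast] at ha hb
  exact ⟨Int.cast_le.2 ha, Int.cast_le.2 hb⟩

theorem isBounded_unitCube (n : ℕ) : Bornology.IsBounded (unitCube n) :=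
  (isBounded_closedBall (x := (0 : Fin n → ℝ)) (r := 1)).subset fun _ hx =>
    mem_closedBall_zero_iff.2 <| (pi_norm_le_iff_of_nonneg zero_le_one).2 fun i =>
      abs_le.2 (hx i)

end intPts

theorem stmt_6_general (n : ℕ) (Δ : Set (Fin n → ℝ)) (hΔc : IsCompact Δ) :
    (volume Δ).toReal ≤ ((intPts (Δ + unitCube n)).ncard : ℝ) ∧
    ∀ a b : Fin n → ℤ,
      (volume (intBox a b ∩ Δ)).toReal ≤
        ((intPts (intBox a b ∩ (Δ + unitCube n))).ncard : ℝ) := by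
  have hbdd : Bornology.IsBounded (Δ + unitCube n) := hΔc.isBounded.add (isBounded_unitCube n)
  refine ⟨toReal_volume_le_ncard_intPts hbdd fun _ hx => roundPt_mem_intPts_add_unitCube hx,
    fun a b => toReal_volume_le_ncard_intPts (hbdd.subset inter_subset_right) fun x hx => ?_⟩
  obtain ⟨hmem, hint⟩ := roundPt_mem_intPts_add_unitCube hx.2
  exact ⟨⟨roundPt_mem_intBox hx.1, hmem⟩, hint⟩

/-- Lemma: for a compact convex `Δ ⊆ ℝ^n`, `ivol(Δ + Π_n) ≥ vol(Δ)`; moreover for any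
integral box `Π`, `ivol(Π ∩ (Δ + Π_n)) ≥ vol(Π ∩ Δ)`. -/
theorem stmt_6 (n : ℕ) (Δ : Set (Fin n → ℝ)) (hΔc : IsCompact Δ) (hΔconv : Convex ℝ Δ) :
    (volume Δ).toReal ≤ ((intPts (Δ + unitCube n)).ncard : ℝ) ∧
    ∀ a b : Fin n → ℤ,
      (volume (intBox a b ∩ Δ)).toReal ≤
        ((intPts (intBox a b ∩ (Δ + unitCube n))).ncard : ℝ) :=
  stmt_6_general n Δ hΔc
end

section
/- Let n ≥ 1, let Δ ⊂ ℝ^n be a compact convex set with n·Π_n ⊆ Δ, and let d > 2n be an integer. Then ivol(Δ ∩ (d−1)Π_n) ≥ (1/8)·vol(Δ ∩ dΠ_n). -/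
open MeasureTheory

/-- The cube `[-s,s]^n` in `ℝ^n`. -/
def cube (n : ℕ) (s : ℝ) : Set (Fin n → ℝ) := {x | ∀ i, x i ∈ Set.Icc (-s) s}

/-! Shrink by `L = 1 - 1/(2n)` and round to the nearest lattice point. The rounding error is at
most `1/2 = (1 - L)·n` in each coordinate, so writing the rounded point as a convex combination
of `x ∈ Δ` (weight `L`) and a point of `nΠ_n ⊆ Δ` puts it in `Δ`; since `d > n` it also lies in
`(d-1)Π_n`. Hence the sup-norm balls of radius `1/2` around the lattice points of
`Δ ∩ (d-1)Π_n` cover `L·(Δ ∩ dΠ_n)`, giving `L^n vol(Δ ∩ dΠ_n) ≤ ivol(Δ ∩ (d-1)Π_n)`,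
and `L^n ≥ 1/2` by Bernoulli. -/

open scoped Pointwise

lemma Convex.mem_of_abs_sub_mul_le {n : ℕ} {Δ : Set (Fin n → ℝ)} (hΔ : Convex ℝ Δ) {ρ L : ℝ}
    (hcube : cube n ρ ⊆ Δ) (hL0 : 0 ≤ L) (hL1 : L < 1) {x p : Fin n → ℝ} (hx : x ∈ Δ)
    (hp : ∀ i, |p i - L * x i| ≤ (1 - L) * ρ) : p ∈ Δ := by
  have hL : 0 < 1 - L := by linarith
  set w : Fin n → ℝ := (1 - L)⁻¹ • (p - L • x)
  have hw : w ∈ cube n ρ := fun i => by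
    rw [Set.mem_Icc, ← abs_le]
    simpa [w, abs_mul, abs_of_pos hL, inv_mul_le_iff₀ hL] using hp i
  have hpw : p = L • x + (1 - L) • w := by
    ext i
    simp only [w, Pi.add_apply, Pi.smul_apply, Pi.sub_apply, smul_eq_mul]
    field_simp
    ring
  exact hpw ▸ hΔ hx (hcube hw) hL0 hL.le (by ring)

lemma intPts_finite_of_subset_cube {n : ℕ} {S : Set (Fin n → ℝ)} {s : ℝ} (hS : S ⊆ cube n s) :
    (intPts S).Finite := by
  refine (Set.Finite.pi fun _ => (Set.finite_Icc (-⌈s⌉) ⌈s⌉).image (Int.cast : ℤ → ℝ)).subset ?_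
  rintro x ⟨hxS, hxint⟩ i -
  obtain ⟨k, hk⟩ := hxint i
  obtain ⟨hlo, hhi⟩ := hk ▸ hS hxS i
  exact ⟨k, ⟨neg_le.mpr (Int.le_ceil_iff.mpr (by push_cast; linarith)),
    Int.le_ceil_iff.mpr (by linarith)⟩, hk.symm⟩

lemma volume_le_ncard_of_forall_dist_le_half {n : ℕ} {S Z : Set (Fin n → ℝ)} (hZ : Z.Finite)
    (hS : ∀ y ∈ S, ∃ p ∈ Z, dist y p ≤ 1 / 2) : volume S ≤ Z.ncard := by
  have hcover : S ⊆ ⋃ p ∈ hZ.toFinset, Metric.closedBall p (1 / 2) := fun y hy => by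
    obtain ⟨p, hpZ, hyp⟩ := hS y hy
    exact Set.mem_biUnion (hZ.mem_toFinset.mpr hpZ) hyp
  calc volume S ≤ ∑ p ∈ hZ.toFinset, volume (Metric.closedBall p (1 / 2 : ℝ)) :=
        (measure_mono hcover).trans (measure_biUnion_finset_le _ _)
    _ = Z.ncard := by
        simp [Real.volume_pi_closedBall, Set.ncard_eq_toFinset_card _ hZ]

lemma dist_round_le_half {n : ℕ} (y : Fin n → ℝ) :
    dist y (fun i => (round (y i) : ℝ)) ≤ 1 / 2 :=
  (dist_pi_le_iff (by norm_num)).mpr fun i => by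
    simpa [Real.dist_eq] using abs_sub_round (y i)

lemma abs_round_le_sub_one {y : ℝ} {m : ℤ} (h : |y| + 1 / 2 < m) : |(round y : ℝ)| ≤ m - 1 := by
  have hlt : |(round y : ℝ)| < m := by
    linarith [abs_sub_abs_le_abs_sub (round y : ℝ) y, abs_sub_comm (round y : ℝ) y,
      abs_sub_round y]
  have : |round y| ≤ m - 1 := Int.le_sub_one_of_lt (by exact_mod_cast hlt)
  exact_mod_cast this

lemma half_le_one_sub_inv_two_mul_pow (n : ℕ) : 1 / 2 ≤ (1 - 1 / (2 * n : ℝ)) ^ n := by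
  rcases Nat.eq_zero_or_pos n with rfl | hn
  · norm_num
  have hn' : (1 : ℝ) ≤ n := by exact_mod_cast hn
  have hinv : 1 / (2 * n : ℝ) ≤ 1 := by rw [div_le_one (by positivity)]; linarith
  calc (1 / 2 : ℝ) = 1 + n * -(1 / (2 * n)) := by field_simp; ring
    _ ≤ (1 + -(1 / (2 * n))) ^ n := one_add_mul_le_pow (by linarith) n
    _ = (1 - 1 / (2 * n)) ^ n := by ring

lemma round_smul_mem_intPts {n : ℕ} (hn : 1 ≤ n) {Δ : Set (Fin n → ℝ)} (hΔ : Convex ℝ Δ)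
    (hcube : cube n n ⊆ Δ) {d : ℕ} (hd : n < d) {x : Fin n → ℝ} (hx : x ∈ Δ ∩ cube n d) :
    (fun i => (round ((1 - 1 / (2 * n : ℝ)) * x i) : ℝ)) ∈ intPts (Δ ∩ cube n ((d : ℝ) - 1)) := by
  set L : ℝ := 1 - 1 / (2 * n)
  have hn' : (1 : ℝ) ≤ n := by exact_mod_cast hn
  have hd' : (n : ℝ) < d := by exact_mod_cast hd
  have hL0 : 0 ≤ L := by
    have : 1 / (2 * n : ℝ) ≤ 1 := by rw [div_le_one (by positivity)]; linarith
    linarith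
  have hL1 : L < 1 := by simp only [L]; linarith [show 0 < 1 / (2 * n : ℝ) by positivity]
  have hLn : (1 - L) * n = 1 / 2 := by simp only [L]; field_simp; ring
  refine ⟨⟨hΔ.mem_of_abs_sub_mul_le hcube hL0 hL1 hx.1 fun i => ?_, fun i => ?_⟩,
    fun i => ⟨_, rfl⟩⟩
  · rw [hLn, abs_sub_comm]
    exact abs_sub_round _
  · have hxi : |L * x i| ≤ L * d := by
      rw [abs_mul, abs_of_nonneg hL0]
      exact mul_le_mul_of_nonneg_left (abs_le.mpr (hx.2 i)) hL0
    have hround := abs_round_le_sub_one (y := L * x i) (m := d) (by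
      push_cast
      nlinarith)
    push_cast at hround
    exact abs_le.mp hround

theorem stmt_9_general (n : ℕ) (hn : 1 ≤ n) (Δ : Set (Fin n → ℝ))
    (hΔconv : Convex ℝ Δ) (hcube : cube n n ⊆ Δ)
    (d : ℕ) (hd : 2 * n < d) :
    (1 / 8 : ℝ) * (volume (Δ ∩ cube n d)).toReal ≤
      ((intPts (Δ ∩ cube n ((d : ℝ) - 1))).ncard : ℝ) := by
  set L : ℝ := 1 - 1 / (2 * n)
  have hscaled : volume (L • (Δ ∩ cube n d)) ≤ (intPts (Δ ∩ cube n ((d : ℝ) - 1))).ncard := by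
    refine volume_le_ncard_of_forall_dist_le_half
      (intPts_finite_of_subset_cube Set.inter_subset_right) ?_
    rintro _ ⟨x, hx, rfl⟩
    exact ⟨_, round_smul_mem_intPts hn hΔconv hcube (by omega) hx, dist_round_le_half _⟩
  have hreal := ENNReal.toReal_mono (by simp) hscaled
  rw [Measure.addHaar_smul, Module.finrank_fin_fun, ENNReal.toReal_mul,
    ENNReal.toReal_ofReal (abs_nonneg _), ENNReal.toReal_natCast] at hreal
  have hL := half_le_one_sub_inv_two_mul_pow n
  rw [abs_of_pos (by linarith)] at hreal
  nlinarith [ENNReal.toReal_nonneg (a := volume (Δ ∩ cube n d))]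

/-- Lemma: if `Δ ⊆ ℝ^n` is compact convex with `n·Π_n ⊆ Δ` and `d > 2n` is an integer, then
`ivol(Δ ∩ (d-1)Π_n) ≥ (1/8)·vol(Δ ∩ dΠ_n)`. -/
theorem stmt_9 (n : ℕ) (hn : 1 ≤ n) (Δ : Set (Fin n → ℝ))
    (hΔc : IsCompact Δ) (hΔconv : Convex ℝ Δ) (hcube : cube n n ⊆ Δ)
    (d : ℕ) (hd : 2 * n < d) :
    (1 / 8 : ℝ) * (volume (Δ ∩ cube n d)).toReal ≤
      ((intPts (Δ ∩ cube n ((d : ℝ) - 1))).ncard : ℝ) :=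
  stmt_9_general n hn Δ hΔconv hcube d hd
end

section
/- Let ξ = Σ_{i=1}^n ξ_i·∂/∂x_i be a vector field with ξ_i holomorphic germs at 0 ∈ ℂ^n (coordinates (x_1,…,x_n), and write t for x_1), and suppose the x_1-axis is invariant under ξ, i.e. ξ_j(t, 0,…,0) ≡ 0 for all j = 2,…,n. Let f be a holomorphic germ at 0 ∈ ℂ^n and g = ξf = Σ_i ξ_i·∂f/∂x_i. Let φ_2,…,φ_n be holomorphic germs at 0 ∈ ℂ with φ_j(0) = 0, not all identically zero, and set v = min_j ord_0 φ_j (with ord_0 of the zero germ taken to be ∞). If f(t, φ_2(t),…,φ_n(t)) ≡ 0, then ord_0 g(t, φ_2(t),…,φ_n(t)) ≥ v − 1. If moreover ξ_i(0) = 0 for every i (ξ is singular at the origin), then ord_0 g(t, φ_2(t),…,φ_n(t)) ≥ v. -/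
/-!
Write `γ(t) = (t, φ(t))`. Differentiating `f ∘ γ ≡ 0` expresses `∂f/∂x₁` through the other
partials, so that along `γ`
`g = Σ_{j ≥ 2} (ξ_j - ξ_1 φ_j') ∂f/∂x_j`.
Since `ξ_j` (`j ≥ 2`) vanishes on the axis and `γ(t)` is at distance `O(t^v)` from `(t, 0)`,
`ξ_j ∘ γ = O(t^v)`; moreover `φ_j' = O(t^(v-1))`, and `ξ_1 ∘ γ` is `O(1)`, or `O(t)` when
`ξ(0) = 0`. So `g ∘ γ` is `O(t^(v-1))`, resp. `O(t^v)`, and for an analytic germ being `O(t^k)`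
is the same as having order at least `k`.
-/

open Filter Asymptotics Topology

section Order

variable {𝕜 E : Type*} [NontriviallyNormedField 𝕜] [NormedAddCommGroup E] [NormedSpace 𝕜 E]
  {f : 𝕜 → E} {z₀ : 𝕜} {n : ℕ}

theorem AnalyticAt.isBigO_sub_pow_iff (hf : AnalyticAt 𝕜 f z₀) :
    f =O[𝓝 z₀] (fun z => (z - z₀) ^ n) ↔ (n : ℕ∞) ≤ analyticOrderAt f z₀ := by
  constructor
  · intro hO
    by_contra! hlt
    obtain ⟨m, hm⟩ := ENat.ne_top_iff_exists.mp (hlt.trans (ENat.natCast_lt_top n)).ne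
    obtain ⟨g, hg, hg0, hfg⟩ := hf.analyticOrderAt_eq_natCast.mp hm.symm
    have hmn : m < n := by exact_mod_cast hm ▸ hlt
    have hg_away : (fun _ => (1 : 𝕜)) =O[𝓝 z₀] g :=
      (isBigO_const_left_iff_pos_le_norm one_ne_zero).mpr ⟨‖g z₀‖ / 2, by positivity,
        (hg.continuousAt.norm.eventually_const_lt (half_lt_self (norm_pos_iff.mpr hg0))).mono
          fun _ => le_of_lt⟩
    have hpow_le : (fun z => (z - z₀) ^ m) =O[𝓝 z₀] f :=
      (((isBigO_refl (fun z => (z - z₀) ^ m) _).smul hg_away).congr_left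
        (by simp)).trans_eventuallyEq (EventuallyEq.symm hfg)
    have hpow_lt : (fun z => (z - z₀) ^ n) =o[𝓝 z₀] fun z => (z - z₀) ^ m :=
      (isLittleO_pow_pow hmn).comp_tendsto (tendsto_sub_nhds_zero_iff.mpr tendsto_id)
    refine isLittleO_irrefl ?_ (hpow_le.trans_isLittleO (hO.trans_isLittleO hpow_lt))
    exact ((eventually_nhdsWithin_of_forall (s := {z₀}ᶜ) fun z hz =>
      pow_ne_zero m (sub_ne_zero.mpr hz)).frequently).filter_mono nhdsWithin_le_nhds
  · intro hn
    obtain ⟨g, hg, hfg⟩ := (natCast_le_analyticOrderAt hf).mp hn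
    exact EventuallyEq.trans_isBigO hfg (((isBigO_refl (fun z => (z - z₀) ^ n) _).smul
      (hg.continuousAt.isBigO_one 𝕜)).congr_right (by simp))

variable [CharZero 𝕜] [CompleteSpace E]

theorem AnalyticAt.isBigO_sub_pow_iff_iteratedDeriv (hf : AnalyticAt 𝕜 f z₀) :
    f =O[𝓝 z₀] (fun z => (z - z₀) ^ n) ↔ ∀ k < n, iteratedDeriv k f z₀ = 0 := by
  rw [hf.isBigO_sub_pow_iff, natCast_le_analyticOrderAt_iff_iteratedDeriv_eq_zero hf]

theorem AnalyticAt.deriv_isBigO_sub_pow (hf : AnalyticAt 𝕜 f z₀)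
    (h : f =O[𝓝 z₀] fun z => (z - z₀) ^ (n + 1)) :
    deriv f =O[𝓝 z₀] fun z => (z - z₀) ^ n := by
  rw [hf.isBigO_sub_pow_iff] at h
  have hf0 : f z₀ = 0 := apply_eq_zero_of_analyticOrderAt_ne_zero
    (lt_of_lt_of_le (by exact_mod_cast n.succ_pos) h).ne'
  rw [hf.deriv.isBigO_sub_pow_iff, analyticOrderAt_deriv_ge_iff hf hf0]
  exact_mod_cast h

end Order

theorem HasStrictFDerivAt.isBigO_comp_sub_comp {𝕜 E F α : Type*} [NontriviallyNormedField 𝕜]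
    [NormedAddCommGroup E] [NormedSpace 𝕜 E] [NormedAddCommGroup F] [NormedSpace 𝕜 F]
    {f : E → F} {f' : E →L[𝕜] F} {x : E} (hf : HasStrictFDerivAt f f' x) {l : Filter α}
    {u w : α → E} (hu : Tendsto u l (𝓝 x)) (hw : Tendsto w l (𝓝 x)) :
    (fun a => f (u a) - f (w a)) =O[l] fun a => u a - w a :=
  hf.isBigO_sub.comp_tendsto (hu.prodMk_nhds hw)

theorem LinearMap.sum_mul_apply_single_eq_of_apply_cons_eq_zero {R : Type*} [CommRing R] {n : ℕ}
    (L : (Fin (n + 1) → R) →ₗ[R] R) (a : Fin (n + 1) → R) {d : Fin n → R}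
    (hL : L (Fin.cons 1 d) = 0) :
    ∑ i, a i * L (Pi.single i 1) = ∑ j, (a j.succ - a 0 * d j) * L (Pi.single j.succ 1) := by
  have hsum : ∀ x, L x = ∑ i, x i * L (Pi.single i 1) := fun x => by
    conv_lhs => rw [← Finset.univ_sum_single x, map_sum]
    refine Finset.sum_congr rfl fun i _ => ?_
    rw [← smul_eq_mul, ← map_smul, ← Pi.single_smul', smul_eq_mul, mul_one]
  have hshift : a - a 0 • Fin.cons 1 d = Fin.cons 0 fun j => a j.succ - a 0 * d j := by
    ext i
    refine Fin.cases ?_ (fun j => ?_) i <;> simp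
  calc ∑ i, a i * L (Pi.single i 1) = L (a - a 0 • Fin.cons 1 d) := by
        rw [map_sub, map_smul, hL, smul_zero, sub_zero, hsum]
    _ = _ := by rw [hshift, hsum, Fin.sum_univ_succ]; simp

section GraphCurve

variable {𝕜 : Type*} [NontriviallyNormedField 𝕜] {n : ℕ}

def graphCurve (φ : Fin n → 𝕜 → 𝕜) (t : 𝕜) : Fin (n + 1) → 𝕜 :=
  Fin.cons t fun j => φ j t

variable {φ : Fin n → 𝕜 → 𝕜}

theorem graphCurve_zero (hφ0 : ∀ j, φ j 0 = 0) : graphCurve φ 0 = 0 := by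
  ext i
  refine Fin.cases ?_ (fun j => ?_) i <;> simp [graphCurve, hφ0]

theorem analyticAt_graphCurve {t : 𝕜} (hφ : ∀ j, AnalyticAt 𝕜 (φ j) t) :
    AnalyticAt 𝕜 (graphCurve φ) t :=
  AnalyticAt.pi fun i => Fin.cases (by simp only [graphCurve, Fin.cons_zero]; exact analyticAt_id)
    (fun j => by simpa [graphCurve] using hφ j) i

theorem hasDerivAt_graphCurve {t : 𝕜} {φ' : Fin n → 𝕜} (hφ : ∀ j, HasDerivAt (φ j) (φ' j) t) :
    HasDerivAt (graphCurve φ) (Fin.cons 1 φ') t :=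
  hasDerivAt_pi.mpr fun i => Fin.cases (by simpa [graphCurve] using hasDerivAt_id' t)
    (fun j => by simpa [graphCurve] using hφ j) i

theorem isBigO_graphCurve_sub_cons_zero {F : Type*} [SeminormedAddCommGroup F] {l : Filter 𝕜}
    {k : 𝕜 → F} (hφ : ∀ j, φ j =O[l] k) :
    (fun t => graphCurve φ t - Fin.cons t 0) =O[l] k :=
  (isBigO_pi (E' := fun _ => 𝕜)).mpr fun i =>
    Fin.cases (by simpa [graphCurve] using isBigO_zero k l)
      (fun j => by simpa [graphCurve] using hφ j) i

theorem sum_mul_fderiv_graphCurve_eq {f : (Fin (n + 1) → 𝕜) → 𝕜} {t : 𝕜}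
    (hf : DifferentiableAt 𝕜 f (graphCurve φ t)) (hφ : ∀ j, DifferentiableAt 𝕜 (φ j) t)
    (hzero : ∀ᶠ s in 𝓝 t, f (graphCurve φ s) = 0) (a : Fin (n + 1) → 𝕜) :
    ∑ i, a i * fderiv 𝕜 f (graphCurve φ t) (Pi.single i 1) =
      ∑ j, (a j.succ - a 0 * deriv (φ j) t) * fderiv 𝕜 f (graphCurve φ t) (Pi.single j.succ 1) := by
  have htangent : fderiv 𝕜 f (graphCurve φ t) (Fin.cons 1 fun j => deriv (φ j) t) = 0 :=
    (hf.hasFDerivAt.comp_hasDerivAt t (hasDerivAt_graphCurve fun j => (hφ j).hasDerivAt)).unique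
      ((hasDerivAt_const t 0).congr_of_eventuallyEq hzero)
  exact LinearMap.sum_mul_apply_single_eq_of_apply_cons_eq_zero
    (fderiv 𝕜 f (graphCurve φ t)).toLinearMap a htangent

section VectorField

variable [CompleteSpace 𝕜] {ξ : Fin (n + 1) → (Fin (n + 1) → 𝕜) → 𝕜}
  {f g : (Fin (n + 1) → 𝕜) → 𝕜}

theorem comp_graphCurve_eventuallyEq (hf : AnalyticAt 𝕜 f 0)
    (hg : ∀ᶠ x in 𝓝 0, g x = ∑ i, ξ i x * fderiv 𝕜 f x (Pi.single i 1))
    (hφ : ∀ j, AnalyticAt 𝕜 (φ j) 0) (hφ0 : ∀ j, φ j 0 = 0)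
    (hzero : ∀ᶠ t in 𝓝 0, f (graphCurve φ t) = 0) :
    (fun t => g (graphCurve φ t)) =ᶠ[𝓝 0] fun t =>
      ∑ j, (ξ j.succ (graphCurve φ t) - ξ 0 (graphCurve φ t) * deriv (φ j) t) *
        fderiv 𝕜 f (graphCurve φ t) (Pi.single j.succ 1) := by
  have hγ : Tendsto (graphCurve φ) (𝓝 0) (𝓝 0) :=
    graphCurve_zero hφ0 ▸ (analyticAt_graphCurve hφ).continuousAt.tendsto
  filter_upwards [hzero.eventually_nhds, hγ.eventually hg, hγ.eventually hf.eventually_analyticAt,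
    eventually_all.mpr fun j => (hφ j).eventually_analyticAt] with t hzero_t hg_t hf_t hφ_t
  rw [hg_t]
  exact sum_mul_fderiv_graphCurve_eq hf_t.differentiableAt (fun j => (hφ_t j).differentiableAt)
    hzero_t _

theorem analyticAt_fderiv_comp_graphCurve_apply (hf : AnalyticAt 𝕜 f 0)
    (hφ : ∀ j, AnalyticAt 𝕜 (φ j) 0) (hφ0 : ∀ j, φ j 0 = 0) (y : Fin (n + 1) → 𝕜) :
    AnalyticAt 𝕜 (fun t => fderiv 𝕜 f (graphCurve φ t) y) 0 :=
  ((ContinuousLinearMap.apply 𝕜 𝕜 y).analyticAt _).comp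
    (hf.fderiv.comp_of_eq (analyticAt_graphCurve hφ) (graphCurve_zero hφ0))

theorem analyticAt_comp_graphCurve (hξ : ∀ i, AnalyticAt 𝕜 (ξ i) 0) (hf : AnalyticAt 𝕜 f 0)
    (hg : ∀ᶠ x in 𝓝 0, g x = ∑ i, ξ i x * fderiv 𝕜 f x (Pi.single i 1))
    (hφ : ∀ j, AnalyticAt 𝕜 (φ j) 0) (hφ0 : ∀ j, φ j 0 = 0)
    (hzero : ∀ᶠ t in 𝓝 0, f (graphCurve φ t) = 0) :
    AnalyticAt 𝕜 (fun t => g (graphCurve φ t)) 0 := by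
  have hξγ : ∀ i, AnalyticAt 𝕜 (fun t => ξ i (graphCurve φ t)) 0 := fun i =>
    (hξ i).comp_of_eq (analyticAt_graphCurve hφ) (graphCurve_zero hφ0)
  refine AnalyticAt.congr ?_ (comp_graphCurve_eventuallyEq hf hg hφ hφ0 hzero).symm
  exact Finset.analyticAt_fun_sum _ fun j _ => ((hξγ j.succ).sub ((hξγ 0).mul (hφ j).deriv)).mul
    (analyticAt_fderiv_comp_graphCurve_apply hf hφ hφ0 _)

theorem isBigO_comp_graphCurve [CharZero 𝕜] (hξ : ∀ i, AnalyticAt 𝕜 (ξ i) 0)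
    (hinv : ∀ᶠ t in 𝓝 (0 : 𝕜), ∀ j : Fin n, ξ j.succ (Fin.cons t 0) = 0)
    (hf : AnalyticAt 𝕜 f 0) (hg : ∀ᶠ x in 𝓝 0, g x = ∑ i, ξ i x * fderiv 𝕜 f x (Pi.single i 1))
    (hφ : ∀ j, AnalyticAt 𝕜 (φ j) 0) (hφ0 : ∀ j, φ j 0 = 0)
    (hzero : ∀ᶠ t in 𝓝 0, f (graphCurve φ t) = 0) {v m : ℕ} (hm : m ≤ 1)
    (hφv : ∀ j, φ j =O[𝓝 0] (· ^ (v + 1)))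
    (hξ₀ : (fun t => ξ 0 (graphCurve φ t)) =O[𝓝 0] (· ^ m)) :
    (fun t => g (graphCurve φ t)) =O[𝓝 0] (· ^ (v + m)) := by
  have hγ : Tendsto (graphCurve φ) (𝓝 0) (𝓝 0) :=
    graphCurve_zero hφ0 ▸ (analyticAt_graphCurve hφ).continuousAt.tendsto
  have haxis : Tendsto (fun t : 𝕜 => (Fin.cons t 0 : Fin (n + 1) → 𝕜)) (𝓝 0) (𝓝 0) := by
    rw [← Matrix.cons_zero_zero (α := 𝕜) (n := n)]
    exact tendsto_id.finCons tendsto_const_nhds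
  have hpow : (fun t : 𝕜 => t ^ (v + 1)) =O[𝓝 0] (· ^ (v + m)) := by
    rcases hm.lt_or_eq with hm | rfl
    · exact (isLittleO_pow_pow (by omega)).isBigO
    · exact isBigO_refl _ _
  -- `ξ_{j+1}` vanishes on the axis, so along the curve it is bounded by the distance to the axis
  have hξsucc : ∀ j : Fin n, (fun t => ξ j.succ (graphCurve φ t)) =O[𝓝 0] (· ^ (v + m)) :=
    fun j => ((((hξ j.succ).hasStrictFDerivAt.isBigO_comp_sub_comp hγ haxis).congr'
      (hinv.mono fun t ht => by simp [ht j]) EventuallyEq.rfl).trans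
      (isBigO_graphCurve_sub_cons_zero hφv)).trans hpow
  have hφ' : ∀ j, deriv (φ j) =O[𝓝 0] (· ^ v) := fun j => by
    simpa using (hφ j).deriv_isBigO_sub_pow (n := v) (by simpa using hφv j)
  have hξ₀φ' : ∀ j, (fun t => ξ 0 (graphCurve φ t) * deriv (φ j) t) =O[𝓝 0] (· ^ (v + m)) :=
    fun j => (hξ₀.mul (hφ' j)).congr_right fun t => by ring
  refine (comp_graphCurve_eventuallyEq hf hg hφ hφ0 hzero).trans_isBigO
    (IsBigO.fun_sum fun j _ => ?_)
  simpa using ((hξsucc j).sub (hξ₀φ' j)).mul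
    ((analyticAt_fderiv_comp_graphCurve_apply hf hφ hφ0 _).continuousAt.isBigO_one 𝕜)

end VectorField

end GraphCurve

theorem stmt_12_general (n : ℕ)
    (ξ : Fin (n + 1) → (Fin (n + 1) → ℂ) → ℂ)
    (hξ : ∀ i, AnalyticAt ℂ (ξ i) 0)
    (hinv : ∀ᶠ t in nhds (0 : ℂ), ∀ j : Fin n,
      ξ j.succ (Fin.cons t (0 : Fin n → ℂ)) = 0)
    (f g : (Fin (n + 1) → ℂ) → ℂ)
    (hf : AnalyticAt ℂ f 0)
    (hg : ∀ᶠ x in nhds (0 : Fin (n + 1) → ℂ),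
      g x = ∑ i, ξ i x * fderiv ℂ f x (Pi.single i 1))
    (φ : Fin n → ℂ → ℂ)
    (hφa : ∀ j, AnalyticAt ℂ (φ j) 0)
    (hφ0 : ∀ j, φ j 0 = 0)
    (hzero : ∀ᶠ t in nhds (0 : ℂ), f (Fin.cons t fun j => φ j t) = 0)
    (v : ℕ)
    (hv : ∀ j, ∀ k < v, iteratedDeriv k (φ j) 0 = 0) :
    (∀ k, k + 1 < v →
      iteratedDeriv k (fun t => g (Fin.cons t fun j => φ j t)) 0 = 0) ∧
    ((∀ i, ξ i 0 = 0) →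
      ∀ k < v, iteratedDeriv k (fun t => g (Fin.cons t fun j => φ j t)) 0 = 0) := by
  obtain _ | v := v
  · simp
  have hga := analyticAt_comp_graphCurve hξ hf hg hφa hφ0 hzero
  have hφv : ∀ j, φ j =O[𝓝 0] (· ^ (v + 1)) := fun j => by
    simpa using (hφa j).isBigO_sub_pow_iff_iteratedDeriv.mpr (hv j)
  have hξ₀ : AnalyticAt ℂ (fun t => ξ 0 (graphCurve φ t)) 0 :=
    (hξ 0).comp_of_eq (analyticAt_graphCurve hφa) (graphCurve_zero hφ0)
  have hgv : ∀ m ≤ 1, (fun t => ξ 0 (graphCurve φ t)) =O[𝓝 0] (· ^ m) →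
      ∀ k < v + m, iteratedDeriv k (fun t => g (graphCurve φ t)) 0 = 0 := fun m hm hξ₀m =>
    hga.isBigO_sub_pow_iff_iteratedDeriv.mp
      (by simpa using isBigO_comp_graphCurve hξ hinv hf hg hφa hφ0 hzero hm hφv hξ₀m)
  refine ⟨fun k hk => hgv 0 zero_le_one ?_ k (by omega), fun hsing => hgv 1 le_rfl ?_⟩
  · simpa using hξ₀.continuousAt.isBigO_one ℂ
  · simpa [graphCurve_zero hφ0, hsing] using hξ₀.isBigO_sub_pow_iff_iteratedDeriv (n := 1)

/-- Rolle-type order comparison for a vector field along an invariant axis: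
if the `x_1`-axis (coordinate `t = x_1`) is `ξ`-invariant, `f(t,φ(t)) ≡ 0` and `g = ξf`, then
`ord_0 g(t,φ(t)) ≥ v - 1` where `v = min_j ord_0 φ_j`; if moreover `ξ` is singular at the
origin then `ord_0 g(t,φ(t)) ≥ v`.  (Order at least `v` is expressed by the vanishing at `0` of
all derivatives of order `< v`, which also handles the convention `ord 0 = ∞`.) -/
theorem stmt_12 (n : ℕ)
    (ξ : Fin (n + 1) → (Fin (n + 1) → ℂ) → ℂ)
    (hξ : ∀ i, AnalyticAt ℂ (ξ i) 0)
    (hinv : ∀ᶠ t in nhds (0 : ℂ), ∀ j : Fin n,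
      ξ j.succ (Fin.cons t (0 : Fin n → ℂ)) = 0)
    (f g : (Fin (n + 1) → ℂ) → ℂ)
    (hf : AnalyticAt ℂ f 0)
    (hg : ∀ᶠ x in nhds (0 : Fin (n + 1) → ℂ),
      g x = ∑ i, ξ i x * fderiv ℂ f x (Pi.single i 1))
    (φ : Fin n → ℂ → ℂ)
    (hφa : ∀ j, AnalyticAt ℂ (φ j) 0)
    (hφ0 : ∀ j, φ j 0 = 0)
    (hne : ¬ ∀ j, ∀ᶠ t in nhds (0 : ℂ), φ j t = 0)
    (hzero : ∀ᶠ t in nhds (0 : ℂ), f (Fin.cons t fun j => φ j t) = 0)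
    (v : ℕ)
    (hv : ∀ j, ∀ k < v, iteratedDeriv k (φ j) 0 = 0) :
    (∀ k, k + 1 < v →
      iteratedDeriv k (fun t => g (Fin.cons t fun j => φ j t)) 0 = 0) ∧
    ((∀ i, ξ i 0 = 0) →
      ∀ k < v, iteratedDeriv k (fun t => g (Fin.cons t fun j => φ j t)) 0 = 0) :=
  stmt_12_general n ξ hξ hinv f g hf hg φ hφa hφ0 hzero v hv
end

section
/- Let f be a holomorphic germ at 0 ∈ ℂ^n, with coordinates written as (t, x_2,…,x_n), and let φ_2,…,φ_n be holomorphic germs at 0 ∈ ℂ with φ_j(0) = 0. Suppose f(t, φ_2(t),…,φ_n(t)) ≡ 0 while f(t, 0,…,0) is not identically zero, and set δ = ord_0 f(t, 0,…,0). Then min_{j=2,…,n} ord_0 φ_j ≤ δ. -/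
open Filter

/-- The order of vanishing of `g` at `p`: the least `k` such that the `k`-th derivative of `g`
at `p` is nonzero (with junk value `0`, via `sInf`, if `g` vanishes identically near `p`). -/
noncomputable def ordAt (g : ℂ → ℂ) (p : ℂ) : ℕ :=
  sInf {k | iteratedDeriv k g p ≠ 0}

/-!
Let `g t = f (t, 0)` have order `δ`. If every `φ_j` vanished to order `> δ`, then
`φ = O(t ^ (δ + 1))`. Since `f` is strictly differentiable at `0` and vanishes along the curve
`t ↦ (t, φ t)`, `g t = f (t, 0) - f (t, φ t) = O(‖φ t‖) = O(t ^ (δ + 1))`, contradicting that the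
analytic function `g` has order exactly `δ`.
-/

open Asymptotics Topology

section AnalyticOrder

variable {𝕜 E : Type*} [NontriviallyNormedField 𝕜] [NormedAddCommGroup E] [NormedSpace 𝕜 E]
  {f : 𝕜 → E} {z₀ : 𝕜} {n : ℕ}

theorem AnalyticAt.natCast_le_analyticOrderAt_iff_isBigO (hf : AnalyticAt 𝕜 f z₀) :
    n ≤ analyticOrderAt f z₀ ↔ f =O[𝓝 z₀] fun z => (z - z₀) ^ n := by
  constructor
  · intro hn
    obtain ⟨g, hg, hfg⟩ := (natCast_le_analyticOrderAt hf).1 hn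
    have hpow_g : (fun z => (z - z₀) ^ n • g z) =O[𝓝 z₀] fun z => (z - z₀) ^ n • (1 : 𝕜) :=
      (isBigO_refl _ _).smul (hg.continuousAt.isBigO_one 𝕜)
    simpa using hpow_g.congr' (EventuallyEq.symm hfg) EventuallyEq.rfl
  · intro h
    by_contra! hlt
    obtain ⟨m, hm⟩ := ENat.ne_top_iff_exists.1 hlt.ne_top
    rw [← hm, Nat.cast_lt] at hlt
    obtain ⟨g, hg, hg0, hfg⟩ := hf.analyticOrderAt_eq_natCast.1 hm.symm
    have hg_away : (fun _ => (1 : 𝕜)) =O[𝓝 z₀] g :=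
      (isBigO_const_left_iff_pos_le_norm one_ne_zero).2 ⟨‖g z₀‖ / 2, by positivity,
        hg.continuousAt.norm.eventually_const_le (half_lt_self (norm_pos_iff.2 hg0))⟩
    have hpow_f : (fun z => (z - z₀) ^ m) =O[𝓝 z₀] f := by
      simpa using ((isBigO_refl (fun z => (z - z₀) ^ m) (𝓝 z₀)).smul hg_away).trans_eventuallyEq
        (EventuallyEq.symm hfg)
    have hpow_lt : (fun z => (z - z₀) ^ n) =o[𝓝 z₀] fun z => (z - z₀) ^ m :=
      (isLittleO_pow_pow hlt).comp_tendsto (tendsto_sub_nhds_zero_iff.2 tendsto_id)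
    refine isLittleO_irrefl ?_ ((hpow_f.trans h).trans_isLittleO hpow_lt)
    exact ((eventually_nhdsWithin_of_forall (s := {z₀}ᶜ) fun z hz =>
      pow_ne_zero m (sub_ne_zero.2 hz)).frequently).filter_mono nhdsWithin_le_nhds

end AnalyticOrder

theorem AnalyticAt.analyticOrderAt_eq_ordAt {g : ℂ → ℂ} {p : ℂ} (hg : AnalyticAt ℂ g p)
    (hne : ¬ ∀ᶠ z in 𝓝 p, g z = 0) : analyticOrderAt g p = ordAt g p := by
  have hex : ∃ k, iteratedDeriv k g p ≠ 0 := by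
    by_contra! h
    exact hne (analyticOrderAt_eq_top.1 (ENat.eq_top_iff_forall_ge.2 fun n =>
      (natCast_le_analyticOrderAt_iff_iteratedDeriv_eq_zero hg).2 fun i _ => h i))
  exact (analyticOrderAt_eq_nat_iff_iteratedDeriv_eq_zero hg).2
    ⟨fun k hk => not_not.1 (Nat.notMem_of_lt_sInf hk), Nat.sInf_mem hex⟩

theorem HasStrictFDerivAt.isBigO_comp_finCons_zero
    {𝕜 E F α : Type*} [NontriviallyNormedField 𝕜] [NormedAddCommGroup E] [NormedSpace 𝕜 E]
    [NormedAddCommGroup F] [NormedSpace 𝕜 F] {n : ℕ} {f : (Fin (n + 1) → E) → F}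
    {f' : (Fin (n + 1) → E) →L[𝕜] F} (hf : HasStrictFDerivAt f f' 0) {l : Filter α}
    {a : α → E} {ψ : α → Fin n → E} (ha : Tendsto a l (𝓝 0)) (hψ : Tendsto ψ l (𝓝 0))
    (hvan : ∀ᶠ t in l, f (Fin.cons (a t) (ψ t) : Fin (n + 1) → E) = 0) :
    (fun t => f (Fin.cons (a t) 0 : Fin (n + 1) → E)) =O[l] ψ := by
  have h00 : (Fin.cons 0 0 : Fin (n + 1) → E) = 0 := Matrix.cons_zero_zero
  have hlim : Tendsto (fun t => ((Fin.cons (a t) 0 : Fin (n + 1) → E),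
      (Fin.cons (a t) (ψ t) : Fin (n + 1) → E))) l (𝓝 (0, 0)) := by
    rw [← h00]
    exact (ha.finCons tendsto_const_nhds).prodMk_nhds (ha.finCons hψ)
  refine ((hf.isBigO_sub.comp_tendsto hlim).congr' ?_ EventuallyEq.rfl).trans ?_
  · filter_upwards [hvan] with t ht
    simp [ht]
  · refine isBigO_of_le l fun t => ?_
    rw [pi_norm_le_iff_of_nonneg (norm_nonneg _)]
    refine Fin.cases (by simp) fun j => ?_
    simpa using norm_le_pi_norm (ψ t) j

/-- If `f(t,φ_2(t),…,φ_n(t)) ≡ 0` while `f(t,0,…,0) ≢ 0` has order `δ` at `0`, then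
`min_j ord_0 φ_j ≤ δ`. -/
theorem stmt_13 (n : ℕ)
    (f : (Fin (n + 1) → ℂ) → ℂ) (hf : AnalyticAt ℂ f 0)
    (φ : Fin n → ℂ → ℂ)
    (hφa : ∀ j, AnalyticAt ℂ (φ j) 0)
    (hφ0 : ∀ j, φ j 0 = 0)
    (hzero : ∀ᶠ t in nhds (0 : ℂ), f (Fin.cons t fun j => φ j t) = 0)
    (hne : ¬ ∀ᶠ t in nhds (0 : ℂ), f (Fin.cons t (0 : Fin n → ℂ)) = 0) :
    ∃ j : Fin n, ∃ k ≤ ordAt (fun t => f (Fin.cons t (0 : Fin n → ℂ))) 0,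
      iteratedDeriv k (φ j) 0 ≠ 0 := by
  set g : ℂ → ℂ := fun t => f (Fin.cons t 0)
  by_contra! hflat
  have hcurve : AnalyticAt ℂ (fun t : ℂ => (Fin.cons t 0 : Fin (n + 1) → ℂ)) 0 :=
    .pi fun i => Fin.cases (by simp only [Fin.cons_zero]; fun_prop)
      (fun j => by simp only [Fin.cons_succ, Pi.zero_apply]; fun_prop) i
  have hg : AnalyticAt ℂ g 0 := hf.comp_of_eq hcurve Matrix.cons_zero_zero
  have hφO : (fun t j => φ j t) =O[𝓝 0] fun t : ℂ => t ^ (ordAt g 0 + 1) := by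
    refine isBigO_pi.2 fun j => ?_
    simpa using ((hφa j).natCast_le_analyticOrderAt_iff_isBigO).1
      ((natCast_le_analyticOrderAt_iff_iteratedDeriv_eq_zero (hφa j)).2
        fun k hk => hflat j k (Nat.lt_succ_iff.1 hk))
  have hφlim : Tendsto (fun t j => φ j t) (𝓝 0) (𝓝 0) :=
    tendsto_pi_nhds.2 fun j => by simpa [hφ0] using (hφa j).continuousAt.tendsto
  have hgO : g =O[𝓝 0] fun t : ℂ => t ^ (ordAt g 0 + 1) :=
    (hf.hasStrictFDerivAt.isBigO_comp_finCons_zero tendsto_id hφlim hzero).trans hφO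
  have hle := hg.natCast_le_analyticOrderAt_iff_isBigO.2 (by simpa using hgO)
  rw [hg.analyticOrderAt_eq_ordAt hne, Nat.cast_le] at hle
  omega
end

section
/- Let u : D → ℂ^n be a holomorphic map on an open disc D ⊆ ℂ around 0 and let d ≥ 1 be an integer. Then there exists a nonzero polynomial P ∈ ℂ[x_1,…,x_n] with deg P ≤ d such that either P∘u is identically zero, or the order of vanishing of P∘u at t = 0 is at least C(n+d, n) − 1, where C(n+d, n) is the binomial coefficient (equal to the dimension of the space of polynomials of degree at most d in n variables). -/
/-!
The polynomials of total degree at most `d` in `n` variables form a space of dimension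
`C(n+d, n)`, whereas the first `C(n+d, n) - 1` derivatives at `0` of `P ∘ u` depend linearly
on `P`. So this linear map has a nonzero kernel, and any nonzero `P` in it makes `P ∘ u`
vanish at `0` to order at least `C(n+d, n) - 1`.
-/

open MvPolynomial

/-- Homogenisation of exponent vectors: the coordinate `none` absorbs the defect `d - ∑ f`. -/
def Option.sumEqEquivSumLe (σ : Type*) [Fintype σ] (d : ℕ) :
    {f : Option σ → ℕ // ∑ i, f i = d} ≃ {f : σ → ℕ // ∑ i, f i ≤ d} where
  toFun f := ⟨f.1 ∘ some, by
    have := f.2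
    rw [Fintype.sum_option] at this
    simp only [Function.comp_apply]
    omega⟩
  invFun f := ⟨fun o => o.elim (d - ∑ i, f.1 i) f.1, by
    have := f.2
    rw [Fintype.sum_option]
    simp only [Option.elim]
    omega⟩
  left_inv f := by
    ext (_ | i)
    · have := f.2
      rw [Fintype.sum_option] at this
      simp only [Option.elim, Function.comp_apply]
      omega
    · rfl
  right_inv _ := rfl

theorem natCard_sum_le_eq_choose (σ : Type*) [Fintype σ] (d : ℕ) :
    Nat.card {f : σ → ℕ // ∑ i, f i ≤ d} = (Fintype.card σ + d).choose (Fintype.card σ) := by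
  classical
  rw [← Nat.card_congr (Option.sumEqEquivSumLe σ d),
    ← Nat.card_congr (Sym.equivNatSumOfFintype (Option σ) d), Nat.card_eq_fintype_card,
    Sym.card_sym_eq_choose, Fintype.card_option, Nat.add_right_comm, Nat.add_sub_cancel,
    Nat.choose_symm_add]

theorem MvPolynomial.finrank_restrictTotalDegree (σ R : Type*) [Fintype σ] [CommSemiring R]
    [StrongRankCondition R] (d : ℕ) :
    Module.finrank R (restrictTotalDegree σ R d) =
      (Fintype.card σ + d).choose (Fintype.card σ) := by
  rw [restrictTotalDegree, Module.finrank_eq_nat_card_basis (basisRestrictSupport R _),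
    ← natCard_sum_le_eq_choose]
  refine Nat.card_congr (Finsupp.equivFunOnFinite.subtypeEquiv fun s => ?_)
  simp [Finsupp.sum_fintype]

section IteratedDerivEval

variable {𝕜 σ : Type*} [NontriviallyNormedField 𝕜] {u : 𝕜 → σ → 𝕜} {x : 𝕜}

theorem AnalyticAt.eval_mvPolynomial (hu : ∀ i, AnalyticAt 𝕜 (u · i) x) (p : MvPolynomial σ 𝕜) :
    AnalyticAt 𝕜 (fun t => eval (u t) p) x :=
  AnalyticAt.aeval_mvPolynomial hu p

noncomputable def MvPolynomial.iteratedDerivEvalₗ [CompleteSpace 𝕜]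
    (hu : ∀ i, AnalyticAt 𝕜 (u · i) x) (m : ℕ) : MvPolynomial σ 𝕜 →ₗ[𝕜] Fin m → 𝕜 where
  toFun p k := iteratedDeriv k (fun t => eval (u t) p) x
  map_add' p q := by
    ext k
    simp only [map_add, Pi.add_apply]
    exact iteratedDeriv_fun_add (AnalyticAt.eval_mvPolynomial hu p).contDiffAt
      (AnalyticAt.eval_mvPolynomial hu q).contDiffAt
  map_smul' c p := by
    ext k
    simp only [smul_eval, RingHom.id_apply, Pi.smul_apply, smul_eq_mul]
    exact iteratedDeriv_const_mul_field c _

theorem MvPolynomial.exists_ne_zero_totalDegree_le_iteratedDeriv_eval_eq_zero [CompleteSpace 𝕜]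
    [Fintype σ] (hu : ∀ i, AnalyticAt 𝕜 (u · i) x) {d m : ℕ}
    (hm : m < (Fintype.card σ + d).choose (Fintype.card σ)) :
    ∃ p : MvPolynomial σ 𝕜, p ≠ 0 ∧ p.totalDegree ≤ d ∧
      ∀ k < m, iteratedDeriv k (fun t => eval (u t) p) x = 0 := by
  let L := (iteratedDerivEvalₗ hu m).comp (restrictTotalDegree σ 𝕜 d).subtype
  have hker : LinearMap.ker L ≠ ⊥ := L.ker_ne_bot_of_finrank_lt <| by
    rwa [Module.finrank_fin_fun, finrank_restrictTotalDegree]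
  obtain ⟨⟨p, hp⟩, hpL, hp0⟩ := (Submodule.ne_bot_iff _).mp hker
  exact ⟨p, by simpa using hp0, (mem_restrictTotalDegree _ _ _).mp hp,
    fun k hk => congrFun hpL ⟨k, hk⟩⟩

end IteratedDerivEval

theorem stmt_17_general (n : ℕ) (r : ℝ) (hr : 0 < r) (u : ℂ → Fin n → ℂ)
    (hu : ∀ t ∈ Metric.ball (0 : ℂ) r, ∀ i, AnalyticAt ℂ (fun s => u s i) t)
    (d : ℕ) :
    ∃ P : MvPolynomial (Fin n) ℂ, P ≠ 0 ∧ P.totalDegree ≤ d ∧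
      ((∀ t ∈ Metric.ball (0 : ℂ) r, MvPolynomial.eval (u t) P = 0) ∨
        ∀ k < Nat.choose (n + d) n - 1,
          iteratedDeriv k (fun t => MvPolynomial.eval (u t) P) 0 = 0) := by
  have hm : (n + d).choose n - 1 < (Fintype.card (Fin n) + d).choose (Fintype.card (Fin n)) := by
    rw [Fintype.card_fin]
    exact Nat.sub_one_lt (Nat.choose_pos (Nat.le_add_right n d)).ne'
  obtain ⟨P, hP0, hPd, hPk⟩ :=
    exists_ne_zero_totalDegree_le_iteratedDeriv_eval_eq_zero (hu 0 (Metric.mem_ball_self hr)) hm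
  exact ⟨P, hP0, hPd, Or.inr hPk⟩

/-- For any holomorphic map `u : D → ℂ^n` on a disc around `0` and any `d ≥ 1` there is a
nonzero polynomial `P` of degree at most `d` such that `P∘u` either vanishes identically or
vanishes at `t = 0` to order at least `C(n+d,n) - 1`. -/
theorem stmt_17 (n : ℕ) (r : ℝ) (hr : 0 < r) (u : ℂ → Fin n → ℂ)
    (hu : ∀ t ∈ Metric.ball (0 : ℂ) r, ∀ i, AnalyticAt ℂ (fun s => u s i) t)
    (d : ℕ) (hd : 1 ≤ d) :
    ∃ P : MvPolynomial (Fin n) ℂ, P ≠ 0 ∧ P.totalDegree ≤ d ∧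
      ((∀ t ∈ Metric.ball (0 : ℂ) r, MvPolynomial.eval (u t) P = 0) ∨
        ∀ k < Nat.choose (n + d) n - 1,
          iteratedDeriv k (fun t => MvPolynomial.eval (u t) P) 0 = 0) :=
  stmt_17_general n r hr u hu d
end
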